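/- Let a be a non-integer dyadic rational in normal-play canonical form. Then at least one of a^{RL} and a^{LR} exists, and either a^L = a^{RL} or a^R = a^{LR}. -/

import Mathlib

universe u

namespace SetTheory

/-- The type of pre-games (as in the former Mathlib `SetTheory.PGame`). -/
inductive PGame : Type (u + 1)
  | mk : ∀ α β : Type u, (α → PGame) → (β → PGame) → PGame

namespace PGame

def LeftMoves : PGame → Type u
  | mk l _ _ _ => l

def RightMoves : PGame → Type u
  | mk _ r _ _ => r

def moveLeft : ∀ g : PGame, LeftMoves g → PGame
  | mk _l _ L _ => L

def moveRight : ∀ g : PGame, RightMoves g → PGame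
  | mk _ _r _ R => R

inductive IsOption : PGame → PGame → Prop
  | moveLeft {x : PGame} (i : x.LeftMoves) : IsOption (x.moveLeft i) x
  | moveRight {x : PGame} (i : x.RightMoves) : IsOption (x.moveRight i) x

instance : Zero PGame :=
  ⟨⟨PEmpty, PEmpty, PEmpty.elim, PEmpty.elim⟩⟩

def neg : PGame → PGame
  | ⟨l, r, L, R⟩ => ⟨r, l, fun i => neg (R i), fun i => neg (L i)⟩

instance : Neg PGame :=
  ⟨neg⟩

noncomputable instance : Add PGame.{u} :=
  ⟨fun x y => by
    induction x generalizing y with | mk xl xr _ _ IHxl IHxr => _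
    induction y with | mk yl yr yL yR IHyl IHyr => _
    have y := mk yl yr yL yR
    refine ⟨xl ⊕ yl, xr ⊕ yr, Sum.rec ?_ ?_, Sum.rec ?_ ?_⟩
    · exact fun i => IHxl i y
    · exact IHyl
    · exact fun i => IHxr i y
    · exact IHyr⟩

end PGame

end SetTheory

open SetTheory

namespace Misere

/-- `F` is a follower of `G`: reachable from `G` by a (possibly empty) sequence of moves. -/
def Follower (F G : PGame) : Prop := Relation.ReflTransGen PGame.IsOption F G

def IsLeftEnd (G : PGame) : Prop := IsEmpty G.LeftMoves
def IsRightEnd (G : PGame) : Prop := IsEmpty G.RightMoves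

/-- A dead left end: every follower (including itself) is a left end. -/
def DeadLeftEnd (G : PGame) : Prop := ∀ F, Follower F G → IsLeftEnd F
def DeadRightEnd (G : PGame) : Prop := ∀ F, Follower F G → IsRightEnd F
def DeadEnd (G : PGame) : Prop := DeadLeftEnd G ∨ DeadRightEnd G

/-- A game is dead-ending if every end follower is a dead end. -/
def DeadEnding (G : PGame) : Prop :=
  ∀ F, Follower F G → (IsLeftEnd F → DeadLeftEnd F) ∧ (IsRightEnd F → DeadRightEnd F)

/-- The universe of dead-ending games. -/
def E : Set PGame := {G | DeadEnding G}

/-- `(misereWins G).1` : Left, moving first, wins `G` under misère play;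
    `(misereWins G).2` : Right, moving first, wins `G` under misère play. -/
def misereWins : PGame → Prop × Prop
  | PGame.mk l r L R =>
      (IsEmpty l ∨ ∃ i, ¬ (misereWins (L i)).2,
       IsEmpty r ∨ ∃ j, ¬ (misereWins (R j)).1)

def LeftWinsGF (G : PGame) : Prop := (misereWins G).1
def RightWinsGF (G : PGame) : Prop := (misereWins G).2

inductive MOutcome : Type
  | L | N | P | R
deriving DecidableEq

/-- Partial order on misère outcomes: `R` minimal, `L` maximal, `N` and `P` incomparable. -/
def MOutcome.le : MOutcome → MOutcome → Prop
  | .R, _ => True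
  | _, .L => True
  | a, b => a = b

instance : LE MOutcome := ⟨MOutcome.le⟩

/-- The misère outcome of a game. -/
noncomputable def outcome (G : PGame) : MOutcome := by
  classical
  exact if LeftWinsGF G then (if RightWinsGF G then .N else .L)
        else (if RightWinsGF G then .R else .P)

/-- `G ≡ H (mod U)`. -/
def equivMod (U : Set PGame) (G H : PGame) : Prop :=
  ∀ X ∈ U, outcome (G + X) = outcome (H + X)

/-- `G ≧ H (mod U)`. -/
def geMod (U : Set PGame) (G H : PGame) : Prop :=
  ∀ X ∈ U, outcome (H + X) ≤ outcome (G + X)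

/-- `LeftChain G n`: there is a sequence of `n` consecutive Left moves from `G`
ending at the zero position. -/
inductive LeftChain : PGame → ℕ → Prop
  | zero (G : PGame) : IsLeftEnd G → IsRightEnd G → LeftChain G 0
  | succ (G : PGame) (i : G.LeftMoves) (n : ℕ) :
      LeftChain (G.moveLeft i) n → LeftChain G (n + 1)

inductive RightChain : PGame → ℕ → Prop
  | zero (G : PGame) : IsLeftEnd G → IsRightEnd G → RightChain G 0
  | succ (G : PGame) (j : G.RightMoves) (n : ℕ) :
      RightChain (G.moveRight j) n → RightChain G (n + 1)

/-- Left-length: minimum number of consecutive Left moves needed to reach zero. -/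
noncomputable def leftLength (G : PGame) : ℕ := sInf {n | LeftChain G n}

/-- Right-length: minimum number of consecutive Right moves needed to reach zero. -/
noncomputable def rightLength (G : PGame) : ℕ := sInf {n | RightChain G n}

/-- Normal-play canonical form of a nonnegative integer. -/
def natGame : ℕ → PGame
  | 0 => 0
  | n + 1 => PGame.mk PUnit PEmpty (fun _ => natGame n) PEmpty.elim

/-- Normal-play canonical form of an integer (negatives are conjugates). -/
def intGame (n : ℤ) : PGame :=
  if 0 ≤ n then natGame n.toNat else -natGame (-n).toNat

/-- Normal-play canonical form of the dyadic rational `m / 2 ^ j`. -/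
def dyadicGame : ℤ → ℕ → PGame
  | m, 0 => intGame m
  | m, j + 1 =>
      if m % 2 = 0 then dyadicGame (m / 2) j
      else PGame.mk PUnit PUnit (fun _ => dyadicGame ((m - 1) / 2) j)
            (fun _ => dyadicGame ((m + 1) / 2) j)

/-- The closure of dead ends: finite disjunctive sums of dead ends. -/
def DeadEndClosure : Set PGame :=
  {G | ∃ l : List PGame, (∀ x ∈ l, DeadEnd x) ∧ G = l.sum}

end Misere

open Misere SetTheory PGame

/-! Write `a = (2n + 1) / 2 ^ (k + 1)`, so that `a^L = n / 2 ^ k` and `a^R = (n + 1) / 2 ^ k`.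
Of these two consecutive dyadics the simpler one is an option of the other: for `k > 0` the
one with even numerator is an option of the odd one, and for integers the one nearer to zero.
Hence either `a^L = a^{RL}` or `a^R = a^{LR}`, and in particular that second-level option exists. -/

namespace SetTheory.PGame

theorem neg_zero_eq_zero : -(0 : PGame) = 0 := by
  change neg (mk PEmpty PEmpty PEmpty.elim PEmpty.elim) = mk PEmpty PEmpty PEmpty.elim PEmpty.elim
  rw [neg]
  congr <;> funext i <;> exact i.elim

end SetTheory.PGame

namespace Misere

theorem intGame_natCast (k : ℕ) : intGame k = natGame k := by
  simp [intGame]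

theorem intGame_neg_natCast (k : ℕ) : intGame (-k) = -natGame k := by
  rcases k with _ | k
  · simp [intGame, natGame, neg_zero_eq_zero]
  · rw [intGame, if_neg (by omega)]
    simp

theorem intGame_add_one_moveLeft {n : ℤ} (hn : 0 ≤ n) :
    ∃ i, (intGame (n + 1)).moveLeft i = intGame n := by
  lift n to ℕ using hn
  rw [← Nat.cast_succ, intGame_natCast, intGame_natCast]
  exact ⟨PUnit.unit, rfl⟩

theorem intGame_moveRight {n : ℤ} (hn : n < 0) :
    ∃ i, (intGame n).moveRight i = intGame (n + 1) := by
  obtain ⟨k, rfl⟩ : ∃ k : ℕ, n = -(k + 1 : ℕ) := ⟨(-n - 1).toNat, by omega⟩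
  rw [show -((k + 1 : ℕ) : ℤ) + 1 = -k by push_cast; ring, intGame_neg_natCast,
    intGame_neg_natCast]
  exact ⟨PUnit.unit, rfl⟩

theorem dyadicGame_two_mul (n : ℤ) (k : ℕ) : dyadicGame (2 * n) (k + 1) = dyadicGame n k := by
  rw [dyadicGame, if_pos (by omega)]
  congr 1
  omega

theorem dyadicGame_two_mul_add_one (n : ℤ) (k : ℕ) :
    dyadicGame (2 * n + 1) (k + 1) =
      mk PUnit PUnit (fun _ => dyadicGame n k) (fun _ => dyadicGame (n + 1) k) := by
  rw [dyadicGame, if_neg (by omega)]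
  congr <;> funext <;> congr 1 <;> omega

/-- `n / 2 ^ k` is simpler (born earlier) than `(n + 1) / 2 ^ k`. -/
def IsSimplerThanSucc (n : ℤ) : ℕ → Prop
  | 0 => 0 ≤ n
  | _ + 1 => Even n

theorem dyadicGame_add_one_moveLeft {n : ℤ} {k : ℕ} (h : IsSimplerThanSucc n k) :
    ∃ i, (dyadicGame (n + 1) k).moveLeft i = dyadicGame n k := by
  rcases k with _ | k
  · exact intGame_add_one_moveLeft h
  obtain ⟨t, rfl⟩ := h
  rw [← two_mul, dyadicGame_two_mul_add_one, dyadicGame_two_mul]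
  exact ⟨PUnit.unit, rfl⟩

theorem dyadicGame_moveRight {n : ℤ} {k : ℕ} (h : ¬IsSimplerThanSucc n k) :
    ∃ i, (dyadicGame n k).moveRight i = dyadicGame (n + 1) k := by
  rcases k with _ | k
  · exact intGame_moveRight (not_le.mp h)
  obtain ⟨t, rfl⟩ := Int.not_even_iff_odd.mp h
  rw [dyadicGame_two_mul_add_one, show 2 * t + 1 + 1 = 2 * (t + 1) by ring, dyadicGame_two_mul]
  exact ⟨PUnit.unit, rfl⟩

end Misere

/-- for a non-integer canonical dyadic a, at least one of a^{RL}, a^{LR}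
exists, and either a^L = a^{RL} or a^R = a^{LR} (as game trees). -/
theorem stmt11 (m : ℤ) (j : ℕ) (hodd : Odd m) (hj : 0 < j) :
    ((∃ ir : (dyadicGame m j).RightMoves,
        Nonempty ((dyadicGame m j).moveRight ir).LeftMoves) ∨
     (∃ il : (dyadicGame m j).LeftMoves,
        Nonempty ((dyadicGame m j).moveLeft il).RightMoves)) ∧
    ((∀ il : (dyadicGame m j).LeftMoves, ∃ ir : (dyadicGame m j).RightMoves,
        ∃ irl : ((dyadicGame m j).moveRight ir).LeftMoves,
          (dyadicGame m j).moveLeft il = ((dyadicGame m j).moveRight ir).moveLeft irl) ∨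
     (∀ ir : (dyadicGame m j).RightMoves, ∃ il : (dyadicGame m j).LeftMoves,
        ∃ ilr : ((dyadicGame m j).moveLeft il).RightMoves,
          (dyadicGame m j).moveRight ir = ((dyadicGame m j).moveLeft il).moveRight ilr)) := by
  obtain ⟨k, rfl⟩ : ∃ k, j = k + 1 := ⟨j - 1, by omega⟩
  obtain ⟨n, rfl⟩ := hodd
  -- each occurrence of `dyadicGame` in the statement has its own universe, hence the repeated
  -- `rw` and the option lemmas being invoked once per occurrence
  repeat rw [dyadicGame_two_mul_add_one]
  by_cases h : IsSimplerThanSucc n k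
  · obtain ⟨i, -⟩ := dyadicGame_add_one_moveLeft h
    exact ⟨Or.inl ⟨PUnit.unit, ⟨i⟩⟩, Or.inl fun _ =>
      ⟨PUnit.unit, (dyadicGame_add_one_moveLeft h).imp fun _ => Eq.symm⟩⟩
  · obtain ⟨i, -⟩ := dyadicGame_moveRight h
    exact ⟨Or.inr ⟨PUnit.unit, ⟨i⟩⟩, Or.inr fun _ =>
      ⟨PUnit.unit, (dyadicGame_moveRight h).imp fun _ => Eq.symm⟩⟩
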